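/- Grid-uniform distributions are dense among continuous distributions on a rectangular support: for any probability distribution H on a compact rectangle R ⊂ ℝ^d with continuous density and any ε > 0, there is a grid ρ of R such that the grid-uniform version H_ρ satisfies H(H, H_ρ) < ε in Hellinger distance. -/

import Mathlib

open MeasureTheory Set

/-- An orthogonal grid of the rectangle `Π_i [lo i, hi i]`. -/
structure RGrid (d : ℕ) (lo hi : Fin d → ℝ) where
  n : Fin d → ℕ
  npos : ∀ i, 0 < n i
  pts : (i : Fin d) → Fin (n i + 1) → ℝ
  mono : ∀ i, StrictMono (pts i)
  first : ∀ i, pts i 0 = lo i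
  last : ∀ i, pts i (Fin.last (n i)) = hi i

variable {d : ℕ} {lo hi : Fin d → ℝ}

abbrev RGrid.CellIdx (g : RGrid d lo hi) := (i : Fin d) → Fin (g.n i)

def RGrid.cell (g : RGrid d lo hi) (k : g.CellIdx) : Set (Fin d → ℝ) :=
  Set.univ.pi fun i => Set.Ioc (g.pts i (k i).castSucc) (g.pts i (k i).succ)

/-- The grid-uniform version `H_ρ` of a measure `H` on the rectangle. -/
noncomputable def RGrid.gridUniform (g : RGrid d lo hi) (μ : Measure (Fin d → ℝ)) :
    Measure (Fin d → ℝ) :=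
  Measure.sum fun k : g.CellIdx =>
    (μ (g.cell k) / volume (g.cell k)) • volume.restrict (g.cell k)

/-- Squared Hellinger distance, via Radon–Nikodym derivatives w.r.t. Lebesgue. -/
noncomputable def hellingerSq {d : ℕ} (μ ν : Measure (Fin d → ℝ)) : ℝ :=
  (1/2) * ∫ x, (Real.sqrt ((μ.rnDeriv volume x).toReal) -
    Real.sqrt ((ν.rnDeriv volume x).toReal)) ^ 2

/- ----------------------- auxiliary lemmas ----------------------- -/

lemma sqrt_sub_sq_le_abs {a b : ℝ} (ha : 0 ≤ a) (hb : 0 ≤ b) :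
    (Real.sqrt a - Real.sqrt b) ^ 2 ≤ |a - b| := by
  rcases le_total a b with h | h
  · rw [abs_sub_comm, abs_of_nonneg (sub_nonneg.2 h)]
    nlinarith [Real.sq_sqrt ha, Real.sq_sqrt hb, Real.sqrt_nonneg a, Real.sqrt_nonneg b,
      mul_le_mul_of_nonneg_left (Real.sqrt_le_sqrt h) (Real.sqrt_nonneg a)]
  · rw [abs_of_nonneg (sub_nonneg.2 h)]
    nlinarith [Real.sq_sqrt ha, Real.sq_sqrt hb, Real.sqrt_nonneg a, Real.sqrt_nonneg b,
      mul_le_mul_of_nonneg_left (Real.sqrt_le_sqrt h) (Real.sqrt_nonneg b)]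

lemma Ioc_grid_unique {n : ℕ} {p : Fin (n + 1) → ℝ} (hp : StrictMono p) {j j' : Fin n} {x : ℝ}
    (h : x ∈ Set.Ioc (p j.castSucc) (p j.succ)) (h' : x ∈ Set.Ioc (p j'.castSucc) (p j'.succ)) :
    j = j' := by
  rcases lt_trichotomy j j' with hlt | heq | hlt
  · exfalso
    have hle : j.succ ≤ j'.castSucc := by
      simp only [Fin.le_def, Fin.val_succ, Fin.coe_castSucc]
      exact hlt
    have := hp.monotone hle
    exact absurd (h.2.trans_lt (this.trans_lt h'.1)) (lt_irrefl x)
  · exact heq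
  · exfalso
    have hle : j'.succ ≤ j.castSucc := by
      simp only [Fin.le_def, Fin.val_succ, Fin.coe_castSucc]
      exact hlt
    have := hp.monotone hle
    exact absurd (h'.2.trans_lt (this.trans_lt h.1)) (lt_irrefl x)

/-- The uniform grid with `m` subdivisions in each direction. -/
noncomputable def unifGrid (hlh : ∀ i, lo i < hi i) (m : ℕ) (hm : 0 < m) : RGrid d lo hi where
  n := fun _ => m
  npos := fun _ => hm
  pts := fun i j => lo i + (j.val : ℝ) * ((hi i - lo i) / m)
  mono := fun i => by
    intro j j' h
    have hw : 0 < (hi i - lo i) / m := div_pos (sub_pos.2 (hlh i)) (by positivity)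
    have hc : (j.val : ℝ) < j'.val := by exact_mod_cast h
    nlinarith
  first := fun i => by simp
  last := fun i => by
    have hm' : (m : ℝ) ≠ 0 := by positivity
    simp only [Fin.val_last]
    field_simp
    ring

/- ----------------------- main theorem ----------------------- -/

/-- grid-uniform distributions are dense (in the Hellinger sense)
among probability distributions with continuous density on a compact rectangle. -/
theorem gridUniform_dense_on_rectangle (hlh : ∀ i, lo i < hi i)
    (c : (Fin d → ℝ) → ℝ)
    (hcont : ContinuousOn c (Set.univ.pi fun i => Set.Icc (lo i) (hi i)))
    (hnn : ∀ x, 0 ≤ c x)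
    (H : Measure (Fin d → ℝ))
    (hH : H = (volume.restrict (Set.univ.pi fun i => Set.Icc (lo i) (hi i))).withDensity
      fun x => ENNReal.ofReal (c x))
    (hprob : IsProbabilityMeasure H)
    (ε : ℝ) (hε : 0 < ε) :
    ∃ g : RGrid d lo hi, hellingerSq H (g.gridUniform H) < ε ^ 2 := by
  classical
  set S : Set (Fin d → ℝ) := Set.univ.pi fun i => Set.Icc (lo i) (hi i) with hSdef
  have hS : MeasurableSet S := MeasurableSet.univ_pi fun i => measurableSet_Icc
  have hScomp : IsCompact S := isCompact_univ_pi fun i => isCompact_Icc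
  set T : Set (Fin d → ℝ) := Set.univ.pi fun i => Set.Ioc (lo i) (hi i) with hTdef
  have hTS : T ⊆ S := Set.pi_mono fun i _ => Set.Ioc_subset_Icc_self
  -- S \ T is Lebesgue-null
  have hST : volume (S \ T) = 0 := by
    have hsub : S \ T ⊆ ⋃ i, {x : Fin d → ℝ | x i = lo i} := by
      intro x ⟨hxS, hxT⟩
      simp only [hSdef, hTdef, Set.mem_pi, Set.mem_univ, forall_true_left, Set.mem_Icc,
        Set.mem_Ioc, not_forall] at hxS hxT
      obtain ⟨i, hi⟩ := hxT
      have h1 := hxS i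
      refine Set.mem_iUnion.2 ⟨i, ?_⟩
      have : ¬ lo i < x i := fun hlt => hi ⟨hlt, h1.2⟩
      exact le_antisymm (not_lt.1 this) h1.1
    refine measure_mono_null hsub (measure_iUnion_null fun i => ?_)
    have heq : {x : Fin d → ℝ | x i = lo i}
        = Set.univ.pi (Function.update (fun _ => (Set.univ : Set ℝ)) i {lo i}) := by
      ext x
      simp only [Set.mem_setOf_eq, Set.mem_pi, Set.mem_univ, forall_true_left]
      constructor
      · intro h j
        rcases eq_or_ne j i with rfl | hj
        · simp [h]
        · simp [Function.update_of_ne hj]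
      · intro h
        have := h i
        simpa using this
    rw [heq, volume_pi_pi]
    exact Finset.prod_eq_zero (Finset.mem_univ i) (by simp)
  -- parameters
  set V : ℝ := (volume S).toReal with hVdef
  have hV : 0 ≤ V := ENNReal.toReal_nonneg
  set δ : ℝ := ε ^ 2 / (V + 1) with hδdef
  have hδ : 0 < δ := by positivity
  -- uniform continuity
  obtain ⟨η, hη, hmod⟩ := Metric.uniformContinuousOn_iff.1
    (hScomp.uniformContinuousOn_of_continuous hcont) δ hδ
  -- choose m
  set B : ℝ := ∑ i, (hi i - lo i) with hBdef
  have hB : 0 ≤ B := Finset.sum_nonneg fun i _ => sub_nonneg.2 (hlh i).le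
  obtain ⟨N, hN⟩ := exists_nat_gt (B / η)
  set m : ℕ := N + 1 with hmdef
  have hm : 0 < m := Nat.succ_pos N
  have hmR : (0:ℝ) < m := by exact_mod_cast hm
  have hw : ∀ i, (hi i - lo i) / m < η := by
    intro i
    have h1 : hi i - lo i ≤ B :=
      Finset.single_le_sum (fun j _ => sub_nonneg.2 (hlh j).le) (Finset.mem_univ i)
    have h2 : B / η < m := hN.trans_le (by exact_mod_cast Nat.le_succ N)
    have h3 : B < m * η := by
      rw [div_lt_iff₀ hη] at h2; linarith
    rw [div_lt_iff₀ hmR]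
    calc hi i - lo i ≤ B := h1
      _ < m * η := h3
      _ = η * m := mul_comm _ _
  set g : RGrid d lo hi := unifGrid hlh m hm with hgdef
  -- widths
  set w : Fin d → ℝ := fun i => (hi i - lo i) / m with hwdef
  have hwpos : ∀ i, 0 < w i := fun i => div_pos (sub_pos.2 (hlh i)) hmR
  have hpts : ∀ (i : Fin d) (j : Fin (m + 1)), g.pts i j = lo i + (j.val : ℝ) * w i :=
    fun i j => rfl
  -- cell facts
  have hcellmeas : ∀ k : g.CellIdx, MeasurableSet (g.cell k) :=
    fun k => MeasurableSet.univ_pi fun i => measurableSet_Ioc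
  have hcell_mem : ∀ (k : g.CellIdx) (x : Fin d → ℝ),
      x ∈ g.cell k ↔ ∀ i, lo i + ((k i).val : ℝ) * w i < x i
        ∧ x i ≤ lo i + (((k i).val : ℝ) + 1) * w i := by
    intro k x
    simp only [RGrid.cell, Set.mem_pi, Set.mem_univ, forall_true_left, Set.mem_Ioc]
    refine forall_congr' fun i => ?_
    rw [hpts i (k i).castSucc, hpts i (k i).succ]
    simp [Fin.coe_castSucc, Fin.val_succ]
  have hcellT : ∀ k : g.CellIdx, g.cell k ⊆ T := by
    intro k x hx
    rw [hcell_mem] at hx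
    intro i _
    have h := hx i
    have hk1 : ((k i).val : ℝ) + 1 ≤ m := by
      have := (k i).isLt
      exact_mod_cast this
    constructor
    · have : lo i ≤ lo i + ((k i).val : ℝ) * w i := by
        have : (0:ℝ) ≤ ((k i).val : ℝ) * w i := mul_nonneg (Nat.cast_nonneg _) (hwpos i).le
        linarith
      exact this.trans_lt h.1
    · have hup : lo i + (((k i).val : ℝ) + 1) * w i ≤ hi i := by
        have : (((k i).val : ℝ) + 1) * w i ≤ (m : ℝ) * w i :=
          mul_le_mul_of_nonneg_right hk1 (hwpos i).le
        have hmw : (m : ℝ) * w i = hi i - lo i := by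
          rw [hwdef]; field_simp
        linarith
      exact h.2.trans hup
  have hcellvol : ∀ k : g.CellIdx, volume (g.cell k) = ∏ i, ENNReal.ofReal (w i) := by
    intro k
    rw [RGrid.cell, volume_pi_pi]
    refine Finset.prod_congr rfl fun i _ => ?_
    rw [Real.volume_Ioc, hpts i (k i).castSucc, hpts i (k i).succ]
    congr 1
    simp [Fin.coe_castSucc, Fin.val_succ]
    ring
  set W : ENNReal := ∏ i, ENNReal.ofReal (w i) with hWdef
  have hW0 : W ≠ 0 := by
    rw [hWdef]
    refine Finset.prod_ne_zero_iff.2 fun i _ => ?_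
    simp [ENNReal.ofReal_eq_zero, not_le, hwpos i]
  have hWtop : W ≠ ⊤ := by
    rw [hWdef]
    exact (ENNReal.prod_lt_top fun i _ => ENNReal.ofReal_lt_top).ne
  -- each point of T lies in a unique cell
  have hmemT : ∀ x ∈ T, ∃ k : g.CellIdx, x ∈ g.cell k := by
    intro x hx
    have hxi : ∀ i, lo i < x i ∧ x i ≤ hi i := by
      intro i; exact hx i (Set.mem_univ i)
    refine ⟨fun i => ⟨⌈(x i - lo i) / w i⌉₊ - 1, ?_⟩, ?_⟩
    · show ⌈(x i - lo i) / w i⌉₊ - 1 < m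
      have ht0 : 0 < (x i - lo i) / w i := div_pos (sub_pos.2 (hxi i).1) (hwpos i)
      have htm : (x i - lo i) / w i ≤ m := by
        rw [div_le_iff₀ (hwpos i)]
        have : (m:ℝ) * w i = hi i - lo i := by rw [hwdef]; field_simp
        linarith [(hxi i).2]
      have h1 : 1 ≤ ⌈(x i - lo i) / w i⌉₊ := Nat.one_le_ceil_iff.2 ht0
      have h2 : ⌈(x i - lo i) / w i⌉₊ ≤ m := Nat.ceil_le.2 htm
      omega
    · rw [hcell_mem]
      intro i
      set t : ℝ := (x i - lo i) / w i with htdef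
      have ht0 : 0 < t := div_pos (sub_pos.2 (hxi i).1) (hwpos i)
      have h1 : 1 ≤ ⌈t⌉₊ := Nat.one_le_ceil_iff.2 ht0
      have hcast : ((⌈t⌉₊ - 1 : ℕ) : ℝ) = (⌈t⌉₊ : ℝ) - 1 := by
        push_cast [Nat.cast_sub h1]; ring
      constructor
      · have hclt : (⌈t⌉₊ : ℝ) < t + 1 := Nat.ceil_lt_add_one ht0.le
        have : ((⌈t⌉₊ - 1 : ℕ) : ℝ) < t := by rw [hcast]; linarith
        have hx' : ((⌈t⌉₊ - 1 : ℕ) : ℝ) * w i < x i - lo i := by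
          rw [htdef] at this
          calc ((⌈t⌉₊ - 1 : ℕ) : ℝ) * w i < ((x i - lo i) / w i) * w i :=
                mul_lt_mul_of_pos_right this (hwpos i)
            _ = x i - lo i := by field_simp [(hwpos i).ne']
        linarith
      · have hle : t ≤ ⌈t⌉₊ := Nat.le_ceil t
        have hceq : ((⌈t⌉₊ - 1 : ℕ) : ℝ) + 1 = (⌈t⌉₊ : ℝ) := by rw [hcast]; ring
        have hx' : x i - lo i ≤ (((⌈t⌉₊ - 1 : ℕ) : ℝ) + 1) * w i := by
          rw [hceq]
          calc x i - lo i = t * w i := by rw [htdef]; field_simp [(hwpos i).ne']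
            _ ≤ (⌈t⌉₊ : ℝ) * w i := mul_le_mul_of_nonneg_right hle (hwpos i).le
        linarith
  have huniq : ∀ (x : Fin d → ℝ) (k k' : g.CellIdx), x ∈ g.cell k → x ∈ g.cell k' → k = k' := by
    intro x k k' hk hk'
    funext i
    exact Ioc_grid_unique (g.mono i) (hk i (Set.mem_univ i)) (hk' i (Set.mem_univ i))
  -- points in the same cell are η-close
  have hclose : ∀ (k : g.CellIdx) (x y : Fin d → ℝ), x ∈ g.cell k → y ∈ g.cell k →
      dist x y < η := by
    intro k x y hx hy
    rw [dist_pi_lt_iff hη]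
    intro i
    rw [hcell_mem] at hx hy
    have h1 := hx i
    have h2 := hy i
    rw [Real.dist_eq, abs_sub_lt_iff]
    constructor
    · calc x i - y i ≤ lo i + (((k i).val : ℝ) + 1) * w i - y i := by linarith [h1.2]
        _ < lo i + (((k i).val : ℝ) + 1) * w i - (lo i + ((k i).val : ℝ) * w i) := by
            linarith [h2.1]
        _ = w i := by ring
        _ < η := hw i
    · calc y i - x i ≤ lo i + (((k i).val : ℝ) + 1) * w i - x i := by linarith [h2.2]
        _ < lo i + (((k i).val : ℝ) + 1) * w i - (lo i + ((k i).val : ℝ) * w i) := by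
            linarith [h1.1]
        _ = w i := by ring
        _ < η := hw i
  -- densities
  set g0 : (Fin d → ℝ) → ENNReal := fun x => ENNReal.ofReal (c x) with hg0def
  have hg0ae : AEMeasurable g0 (volume.restrict S) :=
    ENNReal.measurable_ofReal.comp_aemeasurable (hcont.aemeasurable hS)
  set f' : (Fin d → ℝ) → ENNReal := S.indicator (hg0ae.mk g0) with hf'def
  have hf'meas : Measurable f' := hg0ae.measurable_mk.indicator hS
  have hf'ae : f' =ᵐ[volume] S.indicator g0 := by
    have h1 : ∀ᵐ x ∂volume, x ∈ S → g0 x = hg0ae.mk g0 x :=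
      (ae_restrict_iff' hS).1 hg0ae.ae_eq_mk
    filter_upwards [h1] with x hx
    rw [hf'def]
    by_cases hxS : x ∈ S
    · rw [Set.indicator_of_mem hxS, Set.indicator_of_mem hxS, hx hxS]
    · rw [Set.indicator_of_notMem hxS, Set.indicator_of_notMem hxS]
  have hHd : H = volume.withDensity f' := by
    rw [hH, ← withDensity_indicator hS]
    exact (withDensity_congr_ae hf'ae).symm
  have hHrn : H.rnDeriv volume =ᵐ[volume] f' := by
    rw [hHd]; exact Measure.rnDeriv_withDensity volume hf'meas
  set avg : g.CellIdx → ENNReal := fun k => H (g.cell k) / volume (g.cell k) with havgdef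
  have havgfin : ∀ k, avg k ≠ ⊤ := by
    intro k
    simp only [havgdef]
    exact (ENNReal.div_lt_top (measure_ne_top H _) (by rw [hcellvol k]; exact hW0)).ne
  set a : (Fin d → ℝ) → ENNReal :=
    fun x => ∑ k : g.CellIdx, (g.cell k).indicator (fun _ => avg k) x with hadef
  have hameas : Measurable a :=
    Finset.measurable_sum _ fun k _ => measurable_const.indicator (hcellmeas k)
  have hνd : g.gridUniform H = volume.withDensity a := by
    refine Measure.ext fun s hs => ?_
    rw [RGrid.gridUniform, Measure.sum_apply _ hs, withDensity_apply _ hs, tsum_fintype]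
    rw [lintegral_finset_sum _ fun k _ => measurable_const.indicator (hcellmeas k)]
    refine Finset.sum_congr rfl fun k _ => ?_
    rw [Measure.smul_apply, smul_eq_mul, Measure.restrict_apply hs,
      lintegral_indicator (hcellmeas k), setLIntegral_const,
      Measure.restrict_apply (hcellmeas k), Set.inter_comm]
  have hνrn : (g.gridUniform H).rnDeriv volume =ᵐ[volume] a := by
    rw [hνd]; exact Measure.rnDeriv_withDensity volume hameas
  -- key estimate: averages are δ-close to c
  have hkey : ∀ x ∈ T, ∀ k : g.CellIdx, x ∈ g.cell k → |c x - (avg k).toReal| ≤ δ := by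
    intro x hxT k hxk
    have hxS : x ∈ S := hTS hxT
    have hcc : ∀ y ∈ g.cell k, |c x - c y| ≤ δ := by
      intro y hy
      have hyS : y ∈ S := hTS (hcellT k hy)
      have := hmod x hxS y hyS (hclose k x y hxk hy)
      rw [Real.dist_eq] at this
      exact this.le
    have hHcell : H (g.cell k) = ∫⁻ y in g.cell k, g0 y ∂volume := by
      rw [hH, withDensity_apply _ (hcellmeas k), Measure.restrict_restrict (hcellmeas k),
        Set.inter_eq_left.2 (fun y hy => hTS (hcellT k hy))]
    have hupper : H (g.cell k) ≤ ENNReal.ofReal (c x + δ) * W := by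
      rw [hHcell]
      calc ∫⁻ y in g.cell k, g0 y ∂volume
          ≤ ∫⁻ _ in g.cell k, ENNReal.ofReal (c x + δ) ∂volume := by
            refine setLIntegral_mono' (hcellmeas k) fun y hy => ?_
            exact ENNReal.ofReal_le_ofReal (by
              have := hcc y hy; rw [abs_le] at this; linarith [this.1])
        _ = ENNReal.ofReal (c x + δ) * volume (g.cell k) := setLIntegral_const _ _
        _ = ENNReal.ofReal (c x + δ) * W := by rw [hcellvol k]
    have hlower : ENNReal.ofReal (c x - δ) * W ≤ H (g.cell k) := by
      rw [hHcell]
      calc ENNReal.ofReal (c x - δ) * W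
          = ∫⁻ _ in g.cell k, ENNReal.ofReal (c x - δ) ∂volume := by
            rw [setLIntegral_const, hcellvol k]
        _ ≤ ∫⁻ y in g.cell k, g0 y ∂volume := by
            refine setLIntegral_mono' (hcellmeas k) fun y hy => ?_
            exact ENNReal.ofReal_le_ofReal (by
              have := hcc y hy; rw [abs_le] at this; linarith [this.2])
    have hvolW : volume (g.cell k) = W := hcellvol k
    have hub : (avg k).toReal ≤ c x + δ := by
      refine ENNReal.toReal_le_of_le_ofReal (by linarith [hnn x, hδ.le]) ?_
      simp only [havgdef]; rw [hvolW]
      exact (ENNReal.div_le_iff_le_mul (Or.inl hW0) (Or.inl hWtop)).2 hupper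
    have hlb : c x - δ ≤ (avg k).toReal := by
      rcases le_or_gt (c x - δ) 0 with h0 | h0
      · exact h0.trans ENNReal.toReal_nonneg
      · have : ENNReal.ofReal (c x - δ) ≤ avg k := by
          simp only [havgdef]; rw [hvolW]
          exact (ENNReal.le_div_iff_mul_le (Or.inl hW0) (Or.inl hWtop)).2 hlower
        exact (ENNReal.ofReal_le_iff_le_toReal (havgfin k)).1 this
    rw [abs_le]
    constructor <;> linarith
  -- value of a on a cell
  have haval : ∀ (x : Fin d → ℝ) (k : g.CellIdx), x ∈ g.cell k → a x = avg k := by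
    intro x k hxk
    simp only [hadef]
    rw [Finset.sum_eq_single k]
    · exact Set.indicator_of_mem hxk _
    · intro k' _ hne
      refine Set.indicator_of_notMem (fun hx' => hne ?_) _
      exact huniq x k' k hx' hxk
    · intro h; exact absurd (Finset.mem_univ k) h
  -- the integrand and its bound
  set φ : (Fin d → ℝ) → ℝ :=
    fun x => (Real.sqrt ((f' x).toReal) - Real.sqrt ((a x).toReal)) ^ 2 with hφdef
  have hST' : ∀ᵐ x ∂(volume : Measure (Fin d → ℝ)), x ∉ S \ T := by
    rw [ae_iff]
    simpa only [not_not, Set.setOf_mem_eq] using hST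
  have hφbound : ∀ᵐ x ∂(volume : Measure (Fin d → ℝ)),
      φ x ≤ S.indicator (fun _ => δ) x := by
    filter_upwards [hf'ae, hST'] with x hfx hnx
    by_cases hxS : x ∈ S
    · have hxT : x ∈ T := by
        by_contra hxT
        exact hnx ⟨hxS, hxT⟩
      obtain ⟨k, hk⟩ := hmemT x hxT
      simp only [hφdef]
      have hfx' : f' x = ENNReal.ofReal (c x) := by
        rw [hfx, Set.indicator_of_mem hxS]
      rw [hfx', haval x k hk, Set.indicator_of_mem hxS,
        ENNReal.toReal_ofReal (hnn x)]
      calc (Real.sqrt (c x) - Real.sqrt ((avg k).toReal)) ^ 2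
          ≤ |c x - (avg k).toReal| :=
            sqrt_sub_sq_le_abs (hnn x) ENNReal.toReal_nonneg
        _ ≤ δ := hkey x hxT k hk
    · have hfx' : f' x = 0 := by rw [hfx, Set.indicator_of_notMem hxS]
      have hax : a x = 0 := by
        simp only [hadef]
        refine Finset.sum_eq_zero fun k _ => ?_
        exact Set.indicator_of_notMem (fun hx' => hxS (hTS (hcellT k hx'))) _
      simp only [hφdef]; rw [hfx', hax, Set.indicator_of_notMem hxS]
      simp
  -- integral bound
  have hVfin : volume S < ⊤ := hScomp.measure_lt_top
  have hint : Integrable (S.indicator fun _ => δ) (volume : Measure (Fin d → ℝ)) :=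
    (integrable_indicator_iff hS).2 (integrableOn_const hVfin.ne)
  have hIle : ∫ x, φ x ∂volume ≤ V * δ := by
    have h1 : ∫ x, φ x ∂volume ≤ ∫ x, S.indicator (fun _ => δ) x ∂volume :=
      integral_mono_of_nonneg (Filter.Eventually.of_forall fun x => sq_nonneg _) hint hφbound
    calc ∫ x, φ x ∂volume ≤ ∫ x, S.indicator (fun _ => δ) x ∂volume := h1
      _ = (volume S).toReal • δ := by rw [integral_indicator hS, setIntegral_const]; rfl
      _ = V * δ := by rw [hVdef, smul_eq_mul]
  -- conclude
  refine ⟨g, ?_⟩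
  have heq : hellingerSq H (g.gridUniform H) = (1/2) * ∫ x, φ x ∂volume := by
    rw [hellingerSq]
    congr 1
    refine integral_congr_ae ?_
    filter_upwards [hHrn, hνrn] with x h1 h2
    simp only [hφdef]; rw [h1, h2]
  rw [heq]
  have hfin : (1:ℝ)/2 * ∫ x, φ x ∂volume ≤ (1/2) * (V * δ) := by
    linarith [hIle]
  refine hfin.trans_lt ?_
  have hδε : δ * (V + 1) = ε ^ 2 := by
    rw [hδdef]; field_simp
  nlinarith [hδ, hV]
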